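/- arXiv:2601.12737 — 2 statements merged into one kernel-verified Lean document; each statement's English description precedes it below -/
import Mathlib

section
/- Let x ∈ (0,1) be irrational and suppose that a_n(x) → ∞ as n → ∞ and that log a_n(x) / log a_{n+1}(x) → 1 as n → ∞. Then log |I_n(x)| / log |I_{n+1}(x)| → 1 as n → ∞. -/
open Filter MeasureTheory Set
open scoped ENNReal NNReal Topology

/-- The Gauss map `T(x) = 1/x - ⌊1/x⌋`. -/
noncomputable def gaussMap (x : ℝ) : ℝ := 1 / x - ⌊1 / x⌋

/-- The `n`-th partial quotient `a_n(x) = ⌊1 / T^{n-1} x⌋` of the regular continued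
fraction expansion of `x` (meaningful for `n ≥ 1` and `x` irrational in `(0,1)`). -/
noncomputable def pq (x : ℝ) (n : ℕ) : ℕ := (⌊1 / (gaussMap^[n - 1] x)⌋).toNat

/-- The set `J` of irrationals in `(0,1)` with strictly increasing partial quotients. -/
def Jset : Set ℝ :=
  {x | x ∈ Set.Ioo (0 : ℝ) 1 ∧ Irrational x ∧ ∀ n : ℕ, 1 ≤ n → pq x n < pq x (n + 1)}

/-- The finite sequence `b start, b (start+1), …, b (start+len-1)` is an
arithmetic progression. -/
def IsAPAt (b : ℕ → ℕ) (start len : ℕ) : Prop :=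
  ∃ d : ℤ, ∀ i : ℕ, i + 2 ≤ len → (b (start + i + 1) : ℤ) - (b (start + i) : ℤ) = d

/-- The `F`-set: points of `J` such that for infinitely many `n ≥ 1` the partial
quotients `a_n(x), …, a_{n+ν_n-1}(x)` form an arithmetic progression. -/
def Fset (ν : ℕ → ℕ) : Set ℝ :=
  {x | x ∈ Jset ∧ ∀ N : ℕ, ∃ n : ℕ, N ≤ n ∧ 1 ≤ n ∧ IsAPAt (pq x) n (ν n)}

/-- The `G`-set: points of `J` such that for all sufficiently large `n` the partial
quotients `a_{σ_n}(x), …, a_{σ_n+n-1}(x)` form an arithmetic progression. -/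
def Gset (σ : ℕ → ℕ) : Set ℝ :=
  {x | x ∈ Jset ∧ ∃ N : ℕ, ∀ n : ℕ, N ≤ n → IsAPAt (pq x) (σ n) n}

/-- The fundamental interval (cylinder) `I_n(a_1, …, a_n)`: points of `(0,1]` whose
first `n` partial quotients are `a 1, …, a n`. -/
def cyl (n : ℕ) (a : ℕ → ℕ) : Set ℝ :=
  {x | x ∈ Set.Ioc (0 : ℝ) 1 ∧ ∀ i : ℕ, 1 ≤ i → i ≤ n → pq x i = a i}

/-- The set `Λ` of Lemma 2.6: irrationals in `(0,1)` whose partial quotients lie in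
`L n` at positions `n ∈ V k` and continue the arithmetic progression of common
difference `1` started at `max V k` at positions `n ∈ W k`. -/
def Lam (V W : ℕ → Set ℕ) (L : ℕ → Finset ℕ) : Set ℝ :=
  {x | x ∈ Set.Ioo (0 : ℝ) 1 ∧ Irrational x ∧
    (∀ k : ℕ, 1 ≤ k → ∀ n ∈ V k, pq x n ∈ L n) ∧
    (∀ k : ℕ, 1 ≤ k → ∀ n ∈ W k, pq x n = pq x (sSup (V k)) + (n - sSup (V k)))}


/-
Writing `p_n / q_n` for the convergents of `x`, the cylinder `I_n(x)` is the interval between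
`p_n / q_n` and `(p_n + p_{n-1}) / (q_n + q_{n-1})`, so `-log |I_n(x)| = log (q_n (q_n + q_{n-1}))`.
Call this `ℓ_n`. Since `q_{n+1} ≤ 2 a_{n+1} q_n`, the increment `ℓ_{n+1} - ℓ_n` is
`O(log a_{n+1})`, whereas `q_n ≥ a_1 ⋯ a_n` gives `ℓ_{n+1} ≥ 2 (log a_1 + ⋯ + log a_{n+1})`.
Because `log a_n / log a_{n+1} → 1`, any fixed number `k` of consecutive terms `log a_{n+1-j}` are
eventually all close to `log a_{n+1}`, so the sum exceeds `k log a_{n+1}` for large `n`;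
hence the increment is negligible compared with `ℓ_{n+1}`, and `ℓ_n / ℓ_{n+1} → 1`.
-/

theorem StrictAntiOn.mapsTo_uIoo {α β : Type*} [LinearOrder α] [LinearOrder β] {f : α → β}
    {a b : α} (hf : StrictAntiOn f (uIcc a b)) : MapsTo f (uIoo a b) (uIoo (f a) (f b)) := by
  wlog h : a ≤ b generalizing a b
  · rw [uIoo_comm, uIoo_comm (f a)]
    exact this (uIcc_comm a b ▸ hf) (le_of_not_ge h)
  rw [uIcc_of_le h] at hf
  rw [uIoo_of_le h]
  exact fun x hx ↦ mem_uIoo_of_gt (hf (Ioo_subset_Icc_self hx) (right_mem_Icc.2 h) hx.2)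
    (hf (left_mem_Icc.2 h) (Ioo_subset_Icc_self hx) hx.1)

theorem Real.diam_eq_of_uIoo_subset_of_subset_uIcc {s : Set ℝ} {x y : ℝ} (h₁ : uIoo x y ⊆ s)
    (h₂ : s ⊆ uIcc x y) : Metric.diam s = |x - y| := by
  have hIcc : Metric.diam (uIcc x y) = |x - y| := by
    rw [uIcc, Real.diam_Icc inf_le_sup, max_sub_min_eq_abs, abs_sub_comm]
  have hIoo : Metric.diam (uIoo x y) = |x - y| := by
    rw [uIoo, Real.diam_Ioo inf_le_sup, max_sub_min_eq_abs, abs_sub_comm]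
  exact le_antisymm (hIcc ▸ Metric.diam_mono h₂ (Metric.isBounded_Icc _ _))
    (hIoo ▸ Metric.diam_mono h₁ (Metric.isBounded_Icc _ _ |>.subset h₂))

theorem tendsto_div_add_of_tendsto_div_succ {u : ℕ → ℝ} (hu : ∀ᶠ n in atTop, u n ≠ 0)
    (h : Tendsto (fun n ↦ u n / u (n + 1)) atTop (𝓝 1)) (j : ℕ) :
    Tendsto (fun n ↦ u n / u (n + j)) atTop (𝓝 1) := by
  induction j with
  | zero => exact tendsto_const_nhds.congr' (hu.mono fun n hn ↦ by simp [hn])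
  | succ j ih =>
    have hprod : Tendsto (fun n ↦ u n / u (n + j) * (u (n + j) / u (n + j + 1))) atTop (𝓝 1) := by
      simpa using ih.mul (h.comp (tendsto_add_atTop_nat j))
    refine hprod.congr' (((tendsto_add_atTop_nat j).eventually hu).mono fun n hn ↦ ?_)
    rw [div_mul_div_cancel₀ hn, add_assoc]

theorem tendsto_sum_Icc_div_atTop {u : ℕ → ℝ} (h0 : ∀ i, 1 ≤ i → 0 ≤ u i)
    (hpos : ∀ᶠ n in atTop, 0 < u n) (h : Tendsto (fun n ↦ u n / u (n + 1)) atTop (𝓝 1)) :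
    Tendsto (fun n ↦ (∑ i ∈ Finset.Icc 1 n, u i) / u n) atTop atTop := by
  refine tendsto_atTop.2 fun C ↦ ?_
  obtain ⟨k, hk⟩ := exists_nat_gt C
  have hterms : Tendsto (fun n ↦ ∑ j ∈ Finset.range k, u (n + j) / u (n + k)) atTop (𝓝 k) := by
    have hterm (j) (hj : j ∈ Finset.range k) :
        Tendsto (fun n ↦ u (n + j) / u (n + k)) atTop (𝓝 1) := by
      obtain ⟨i, rfl⟩ : ∃ i, k = j + i := ⟨k - j, by simp at hj; omega⟩
      simpa [Function.comp_def, add_assoc] using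
        (tendsto_div_add_of_tendsto_div_succ (hpos.mono fun _ ↦ ne_of_gt) h i).comp
          (tendsto_add_atTop_nat j)
    simpa using tendsto_finsetSum _ hterm
  have hshift : ∀ᶠ n in atTop, C ≤ (∑ i ∈ Finset.Icc 1 (n + k), u i) / u (n + k) := by
    filter_upwards [hterms.eventually (eventually_gt_nhds hk),
      (tendsto_add_atTop_nat k).eventually hpos, eventually_ge_atTop 1] with n hC hu hn
    calc C ≤ ∑ j ∈ Finset.range k, u (n + j) / u (n + k) := hC.le
      _ = (∑ i ∈ Finset.Ico n (n + k), u i) / u (n + k) := by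
        rw [Finset.sum_Ico_eq_sum_range, Finset.sum_div, Nat.add_sub_cancel_left]
      _ ≤ (∑ i ∈ Finset.Icc 1 (n + k), u i) / u (n + k) := by
        refine div_le_div_of_nonneg_right
          (Finset.sum_le_sum_of_subset_of_nonneg (fun i hi ↦ ?_) fun i hi _ ↦ h0 i ?_) hu.le
        all_goals simp only [Finset.mem_Icc, Finset.mem_Ico] at *; omega
  obtain ⟨N, hN⟩ := eventually_atTop.1 hshift
  filter_upwards [eventually_ge_atTop (N + k)] with m hm
  simpa [Nat.sub_add_cancel (show k ≤ m by omega)] using hN (m - k) (by omega)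

theorem tendsto_div_succ_of_increment_le {ℓ s u : ℕ → ℝ} (hs : ∀ᶠ n in atTop, s n ≤ ℓ n)
    (hmono : ∀ᶠ n in atTop, ℓ n ≤ ℓ (n + 1)) (hinc : ∀ᶠ n in atTop, ℓ (n + 1) ≤ ℓ n + u (n + 1))
    (hsu : Tendsto (fun n ↦ s n / u n) atTop atTop) :
    Tendsto (fun n ↦ ℓ n / ℓ (n + 1)) atTop (𝓝 1) := by
  have hsu' := (tendsto_add_atTop_iff_nat 1).2 hsu
  have hbound : ∀ᶠ n in atTop, ‖ℓ n / ℓ (n + 1) - 1‖ ≤ (s (n + 1) / u (n + 1))⁻¹ := by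
    filter_upwards [(tendsto_add_atTop_nat 1).eventually hs, hmono, hinc,
      hsu'.eventually_ge_atTop 1] with n hs hmono hinc h1
    have hu : 0 < u (n + 1) :=
      lt_of_le_of_ne (by linarith) fun h ↦ by rw [← h, div_zero] at h1; linarith
    have hsu : u (n + 1) ≤ s (n + 1) := by rwa [le_div_iff₀ hu, one_mul] at h1
    have hℓ : 0 < ℓ (n + 1) := by linarith
    rw [Real.norm_eq_abs, inv_div, div_sub_one hℓ.ne', abs_div, abs_of_nonpos (by linarith),
      abs_of_pos hℓ, div_le_div_iff₀ hℓ (by linarith)]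
    nlinarith
  simpa using (squeeze_zero_norm' hbound (tendsto_inv_atTop_zero.comp hsu')).add_const 1

theorem gaussMap_eq_fract (y : ℝ) : gaussMap y = Int.fract (1 / y) := rfl

theorem one_div_floor_add_gaussMap (y : ℝ) : 1 / (⌊1 / y⌋ + gaussMap y) = y := by
  simp [gaussMap]

theorem irrational_gaussMap {y : ℝ} (hy : Irrational y) : Irrational (gaussMap y) := by
  rw [gaussMap_eq_fract, Int.fract, one_div]
  exact hy.inv.sub_intCast _

theorem gaussMap_mem_Ioo {y : ℝ} (hy : Irrational y) : gaussMap y ∈ Ioo 0 1 := by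
  rw [gaussMap_eq_fract]
  exact ⟨Int.fract_pos.2 ((one_div y ▸ hy.inv).ne_int _), Int.fract_lt_one _⟩

theorem irrational_iterate_gaussMap {y : ℝ} (hy : Irrational y) (k : ℕ) :
    Irrational (gaussMap^[k] y) := by
  induction k with
  | zero => exact hy
  | succ k ih =>
    rw [Function.iterate_succ_apply']
    exact irrational_gaussMap ih

theorem iterate_gaussMap_mem_Ioo {x : ℝ} (hx : x ∈ Ioo 0 1) (hirr : Irrational x) (k : ℕ) :
    gaussMap^[k] x ∈ Ioo 0 1 := by
  rcases k with _ | k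
  · exact hx
  · rw [Function.iterate_succ_apply']
    exact gaussMap_mem_Ioo (irrational_iterate_gaussMap hirr k)

theorem one_le_pq {x : ℝ} (hx : x ∈ Ioo 0 1) (hirr : Irrational x) (n : ℕ) : 1 ≤ pq x n := by
  obtain ⟨hpos, hlt⟩ := iterate_gaussMap_mem_Ioo hx hirr (n - 1)
  have hfloor : (1 : ℤ) ≤ ⌊1 / gaussMap^[n - 1] x⌋ :=
    Int.le_floor.2 (by rw [Int.cast_one, le_div_iff₀ hpos]; linarith)
  unfold pq
  omega

theorem pq_succ (y : ℝ) {i : ℕ} (hi : 1 ≤ i) : pq y (i + 1) = pq (gaussMap y) i := by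
  obtain ⟨k, rfl⟩ := Nat.exists_eq_add_of_le' hi
  simp [pq, Function.iterate_succ_apply]

theorem pq_one_eq_iff_floor {y : ℝ} {k : ℕ} (hk : 1 ≤ k) : pq y 1 = k ↔ ⌊1 / y⌋ = k := by
  change ⌊1 / y⌋.toNat = k ↔ _
  omega

theorem pq_one_eq_iff {y : ℝ} (hy : 0 < y) {k : ℕ} (hk : 1 ≤ k) :
    pq y 1 = k ↔ y ∈ Ioc (1 / ((k : ℝ) + 1)) (1 / k) := by
  have hk0 : (0 : ℝ) < k := by exact_mod_cast hk
  rw [pq_one_eq_iff_floor hk, Int.floor_eq_iff, Int.cast_natCast, mem_Ioc, and_comm,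
    le_one_div hk0 hy, one_div_lt hy (by positivity)]

theorem gaussMap_eq_of_pq_one_eq {y : ℝ} {k : ℕ} (hk : 1 ≤ k) (h : pq y 1 = k) :
    gaussMap y = 1 / y - k := by
  rw [gaussMap, (pq_one_eq_iff_floor hk).1 h, Int.cast_natCast]

theorem Ioc_one_div_subset_Ioc {k : ℕ} (hk : 1 ≤ k) :
    Ioc (1 / ((k : ℝ) + 1)) (1 / k) ⊆ Ioc 0 1 :=
  Ioc_subset_Ioc (by positivity) (div_le_one_of_le₀ (by exact_mod_cast hk) (by positivity))

theorem mem_cyl_one_iff {a : ℕ → ℕ} (ha : 1 ≤ a 1) {y : ℝ} :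
    y ∈ cyl 1 a ↔ y ∈ Ioc (1 / ((a 1 : ℝ) + 1)) (1 / a 1) := by
  constructor
  · rintro ⟨hy, hall⟩
    exact (pq_one_eq_iff hy.1 ha).1 (hall 1 le_rfl le_rfl)
  · intro hy
    have hy' := Ioc_one_div_subset_Ioc ha hy
    refine ⟨hy', fun i hi hi' ↦ ?_⟩
    obtain rfl : i = 1 := le_antisymm hi' hi
    exact (pq_one_eq_iff hy'.1 ha).2 hy

def seqShift (a : ℕ → ℕ) (i : ℕ) : ℕ := a (i + 1)

theorem mem_cyl_succ_iff {a : ℕ → ℕ} (ha : ∀ i, 1 ≤ i → 1 ≤ a i) {n : ℕ} (hn : 1 ≤ n) {y : ℝ} :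
    y ∈ cyl (n + 1) a ↔ y ∈ cyl 1 a ∧ gaussMap y ∈ cyl n (seqShift a) := by
  constructor
  · rintro ⟨hy, hall⟩
    have hT : gaussMap y ≠ 0 := by
      intro h0
      have h2 : pq y (1 + 1) = a 2 := hall 2 (by norm_num) (by omega)
      rw [pq_succ y le_rfl, h0, show pq 0 1 = 0 by simp [pq]] at h2
      have := ha 2 (by norm_num)
      omega
    refine ⟨⟨hy, fun i hi hi' ↦ hall i hi (by omega)⟩, ⟨?_, fun i hi hi' ↦ ?_⟩⟩
    · rw [gaussMap_eq_fract] at hT ⊢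
      exact ⟨(Int.fract_nonneg _).lt_of_ne' hT, (Int.fract_lt_one _).le⟩
    · rw [seqShift, ← pq_succ y hi]
      exact hall (i + 1) (by omega) (by omega)
  · rintro ⟨⟨hy, h1⟩, -, hT⟩
    refine ⟨hy, fun i hi hi' ↦ ?_⟩
    obtain rfl | ⟨j, rfl⟩ : i = 1 ∨ ∃ j, i = j + 1 + 1 := by
      rcases i with _ | _ | j <;> simp_all
    · exact h1 1 le_rfl le_rfl
    · rw [pq_succ y (by omega)]
      exact hT (j + 1) (by omega) (by omega)

/-- `convNum a n / convDen a n` is the convergent `p_n / q_n = [0; a 1, …, a n]`. -/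
def convNum (a : ℕ → ℕ) : ℕ → ℕ
  | 0 => 0
  | 1 => 1
  | n + 2 => a (n + 2) * convNum a (n + 1) + convNum a n

def convDen (a : ℕ → ℕ) : ℕ → ℕ
  | 0 => 1
  | 1 => a 1
  | n + 2 => a (n + 2) * convDen a (n + 1) + convDen a n

section Convergents

variable {a : ℕ → ℕ}

theorem convNum_succ_eq_convDen_seqShift (n : ℕ) :
    convNum a (n + 1) = convDen (seqShift a) n := by
  induction n using Nat.twoStepInduction with
  | zero => rfl
  | one => simp [convNum, convDen, seqShift]
  | more n ih₁ ih₂ =>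
    rw [convNum, ih₁, ih₂, convDen]
    rfl

theorem convDen_succ_eq_seqShift (n : ℕ) :
    convDen a (n + 1) = a 1 * convDen (seqShift a) n + convNum (seqShift a) n := by
  induction n using Nat.twoStepInduction with
  | zero => simp [convNum, convDen]
  | one =>
    simp only [convDen, convNum, seqShift, zero_add, Nat.reduceAdd]
    ring
  | more n ih₁ ih₂ =>
    rw [convDen, ih₁, ih₂, convDen, convNum]
    simp only [seqShift]
    ring

theorem convNum_succ_mul_sub (n : ℕ) :
    (convNum a (n + 1) * convDen a n : ℤ) - convNum a n * convDen a (n + 1) = (-1) ^ n := by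
  induction n with
  | zero => simp [convNum, convDen]
  | succ n ih =>
    simp only [convNum, convDen, Nat.cast_add, Nat.cast_mul, pow_succ, ← ih]
    ring

theorem convDen_pos (ha : ∀ i, 1 ≤ i → 1 ≤ a i) (n : ℕ) : 0 < convDen a n := by
  induction n using Nat.twoStepInduction with
  | zero => simp [convDen]
  | one => exact ha 1 le_rfl
  | more n _ ih => rw [convDen]; have := ha (n + 2) (by omega); positivity

theorem convDen_mono (ha : ∀ i, 1 ≤ i → 1 ≤ a i) : Monotone (convDen a) := by
  refine monotone_nat_of_le_succ fun n ↦ ?_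
  rcases n with _ | n
  · exact ha 1 le_rfl
  · rw [convDen]
    nlinarith [ha (n + 2) (by omega)]

theorem convNum_le_convDen (ha : ∀ i, 1 ≤ i → 1 ≤ a i) (n : ℕ) : convNum a n ≤ convDen a n := by
  induction n using Nat.twoStepInduction with
  | zero => simp [convNum, convDen]
  | one => exact ha 1 le_rfl
  | more n ih₁ ih₂ =>
    rw [convNum, convDen]
    gcongr

theorem prod_le_convDen (n : ℕ) :
    ∏ i ∈ Finset.Icc 1 n, a i ≤ convDen a n := by
  induction n using Nat.twoStepInduction with
  | zero => simp [convDen]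
  | one => simp [convDen]
  | more n _ ih =>
    rw [Finset.prod_Icc_succ_top (by omega), convDen, mul_comm]
    exact le_add_right (Nat.mul_le_mul_left _ ih)

theorem convDen_succ_le (ha : ∀ i, 1 ≤ i → 1 ≤ a i) (n : ℕ) :
    convDen a (n + 1) ≤ 2 * a (n + 1) * convDen a n := by
  rcases n with _ | n
  · simp only [convDen, zero_add]
    omega
  · have hmono := convDen_mono ha (Nat.le_succ n)
    rw [convDen]
    nlinarith [ha (n + 2) (by omega)]

end Convergents

/-- `cfValue a n t = [0; a 1, …, a (n - 1), a n + t]`. -/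
noncomputable def cfValue (a : ℕ → ℕ) (n : ℕ) (t : ℝ) : ℝ :=
  (convNum a n + t * convNum a (n - 1)) / (convDen a n + t * convDen a (n - 1))

def cylDenom (a : ℕ → ℕ) (n : ℕ) : ℕ := convDen a n * (convDen a n + convDen a (n - 1))

section CylinderEndpoints

variable {a : ℕ → ℕ}

theorem cfValue_one (t : ℝ) : cfValue a 1 t = 1 / (a 1 + t) := by
  simp [cfValue, convNum, convDen]

theorem cfValue_mem_Icc (ha : ∀ i, 1 ≤ i → 1 ≤ a i) (n : ℕ) {t : ℝ} (ht : 0 ≤ t) :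
    cfValue a n t ∈ Icc 0 1 := by
  have hp : (convNum a n : ℝ) ≤ convDen a n := by exact_mod_cast convNum_le_convDen ha n
  have hp' : (convNum a (n - 1) : ℝ) ≤ convDen a (n - 1) := by
    exact_mod_cast convNum_le_convDen ha (n - 1)
  have hq : (0 : ℝ) < convDen a n := by exact_mod_cast convDen_pos ha n
  refine ⟨by unfold cfValue; positivity, ?_⟩
  rw [cfValue, div_le_one (by positivity)]
  gcongr

theorem cfValue_succ (ha : ∀ i, 1 ≤ i → 1 ≤ a i) {n : ℕ} (hn : 1 ≤ n) {t : ℝ} (ht : 0 ≤ t) :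
    cfValue a (n + 1) t = 1 / (a 1 + cfValue (seqShift a) n t) := by
  obtain ⟨m, rfl⟩ := Nat.exists_eq_add_of_le' hn
  have hq : (0 : ℝ) < convDen (seqShift a) (m + 1) := by
    exact_mod_cast convDen_pos (fun i hi ↦ ha (i + 1) (by omega)) (m + 1)
  simp only [cfValue, Nat.add_sub_cancel]
  rw [convNum_succ_eq_convDen_seqShift (a := a) (m + 1), convNum_succ_eq_convDen_seqShift m,
    convDen_succ_eq_seqShift (a := a) (m + 1), convDen_succ_eq_seqShift (a := a) m]
  push_cast
  have : (0 : ℝ) < convDen (seqShift a) (m + 1) + t * convDen (seqShift a) m := by positivity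
  field_simp
  ring

theorem cylDenom_pos (ha : ∀ i, 1 ≤ i → 1 ≤ a i) (n : ℕ) : 0 < cylDenom a n := by
  have := convDen_pos ha n
  unfold cylDenom
  positivity

theorem abs_cfValue_zero_sub_one (ha : ∀ i, 1 ≤ i → 1 ≤ a i) {n : ℕ} (hn : 1 ≤ n) :
    |cfValue a n 0 - cfValue a n 1| = (cylDenom a n : ℝ)⁻¹ := by
  obtain ⟨m, rfl⟩ := Nat.exists_eq_add_of_le' hn
  have hdet : (convNum a (m + 1) * convDen a m : ℝ) - convNum a m * convDen a (m + 1) =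
      (-1) ^ m := by
    exact_mod_cast convNum_succ_mul_sub m
  have hq := convDen_pos ha (m + 1)
  have hq' := convDen_pos ha m
  have hD := cylDenom_pos ha (m + 1)
  have hdiff : cfValue a (m + 1) 0 - cfValue a (m + 1) 1 = (-1) ^ m / cylDenom a (m + 1) := by
    simp only [cfValue, cylDenom, Nat.add_sub_cancel]
    push_cast
    rw [← hdet]
    field_simp
    ring
  rw [hdiff, abs_div, abs_pow, abs_neg, abs_one, one_pow, abs_of_pos (by positivity), one_div]

end CylinderEndpoints

section CylinderSandwich

variable {a : ℕ → ℕ}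

theorem cyl_one_eq (ha : 1 ≤ a 1) : cyl 1 a = Ioc (1 / ((a 1 : ℝ) + 1)) (1 / a 1) :=
  Set.ext fun _ ↦ mem_cyl_one_iff ha

theorem cyl_subset_uIcc (ha : ∀ i, 1 ≤ i → 1 ≤ a i) {n : ℕ} (hn : 1 ≤ n) :
    cyl n a ⊆ uIcc (cfValue a n 0) (cfValue a n 1) := by
  induction n, hn using Nat.le_induction generalizing a with
  | base =>
    have hk : (0 : ℝ) < a 1 := by exact_mod_cast ha 1 le_rfl
    rw [cyl_one_eq (ha 1 le_rfl), cfValue_one, cfValue_one, add_zero, uIcc_comm,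
      uIcc_of_le (one_div_le_one_div_of_le hk (by linarith))]
    exact Ioc_subset_Icc_self
  | succ n hn ih =>
    have ha' : ∀ i, 1 ≤ i → 1 ≤ seqShift a i := fun i hi ↦ ha (i + 1) (by omega)
    have hanti : AntitoneOn (fun t : ℝ ↦ 1 / (a 1 + t))
        (uIcc (cfValue (seqShift a) n 0) (cfValue (seqShift a) n 1)) := by
      refine AntitoneOn.mono (fun s hs t ht hst ↦ ?_)
        (uIcc_subset_Icc (cfValue_mem_Icc ha' n le_rfl) (cfValue_mem_Icc ha' n zero_le_one))
      have : (0 : ℝ) < a 1 := by exact_mod_cast ha 1 le_rfl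
      have : (0 : ℝ) < a 1 + s := by linarith [hs.1]
      gcongr
    intro y hy
    obtain ⟨hy1, hT⟩ := (mem_cyl_succ_iff ha hn).1 hy
    rw [cfValue_succ ha hn le_rfl, cfValue_succ ha hn zero_le_one,
      ← one_div_floor_add_gaussMap y, (pq_one_eq_iff_floor (ha 1 le_rfl)).1 (hy1.2 1 le_rfl le_rfl),
      Int.cast_natCast]
    exact hanti.mapsTo_uIcc (ih ha' hT)

theorem uIoo_subset_cyl (ha : ∀ i, 1 ≤ i → 1 ≤ a i) {n : ℕ} (hn : 1 ≤ n) :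
    uIoo (cfValue a n 0) (cfValue a n 1) ⊆ cyl n a := by
  induction n, hn using Nat.le_induction generalizing a with
  | base =>
    have hk : (0 : ℝ) < a 1 := by exact_mod_cast ha 1 le_rfl
    rw [cyl_one_eq (ha 1 le_rfl), cfValue_one, cfValue_one, add_zero, uIoo_comm,
      uIoo_of_le (one_div_le_one_div_of_le hk (by linarith))]
    exact Ioo_subset_Ioc_self
  | succ n hn ih =>
    have ha' : ∀ i, 1 ≤ i → 1 ≤ seqShift a i := fun i hi ↦ ha (i + 1) (by omega)
    have hk : (0 : ℝ) < a 1 := by exact_mod_cast ha 1 le_rfl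
    have hI : ∀ t ∈ Icc (0 : ℝ) 1, 1 / (a 1 + t) ∈ Icc (1 / ((a 1 : ℝ) + 1)) (1 / a 1) :=
      fun t ht ↦ ⟨one_div_le_one_div_of_le (by linarith [ht.1]) (by linarith [ht.2]),
        one_div_le_one_div_of_le hk (by linarith [ht.1])⟩
    have hI₀ := hI _ (cfValue_mem_Icc ha' n le_rfl)
    have hI₁ := hI _ (cfValue_mem_Icc ha' n zero_le_one)
    have hanti : StrictAntiOn (fun z : ℝ ↦ 1 / z - a 1) (Icc (1 / ((a 1 : ℝ) + 1)) (1 / a 1)) := by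
      intro s hs t _ hst
      have : (0 : ℝ) < s := lt_of_lt_of_le (by positivity) hs.1
      exact sub_lt_sub_right (one_div_lt_one_div_of_lt this hst) _
    intro y hy
    rw [cfValue_succ ha hn le_rfl, cfValue_succ ha hn zero_le_one] at hy
    have hy1 := (mem_cyl_one_iff (ha 1 le_rfl)).2
      (Ioo_subset_Ioc_self (uIoo_subset_Ioo hI₀ hI₁ hy))
    refine (mem_cyl_succ_iff ha hn).2 ⟨hy1, ih ha' ?_⟩
    rw [gaussMap_eq_of_pq_one_eq (ha 1 le_rfl) (hy1.2 1 le_rfl le_rfl)]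
    simpa using (hanti.mono (uIcc_subset_Icc hI₀ hI₁)).mapsTo_uIoo hy

theorem diam_cyl (ha : ∀ i, 1 ≤ i → 1 ≤ a i) {n : ℕ} (hn : 1 ≤ n) :
    Metric.diam (cyl n a) = (cylDenom a n : ℝ)⁻¹ := by
  rw [Real.diam_eq_of_uIoo_subset_of_subset_uIcc (uIoo_subset_cyl ha hn) (cyl_subset_uIcc ha hn),
    abs_cfValue_zero_sub_one ha hn]

end CylinderSandwich

section CylinderDenominator

variable {a : ℕ → ℕ}

theorem cylDenom_mono (ha : ∀ i, 1 ≤ i → 1 ≤ a i) : Monotone (cylDenom a) := by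
  refine monotone_nat_of_le_succ fun n ↦ ?_
  have h₁ := convDen_mono ha n.le_succ
  have h₂ := convDen_mono ha (n.sub_le 1)
  unfold cylDenom
  rw [Nat.add_sub_cancel]
  gcongr

theorem cylDenom_succ_le (ha : ∀ i, 1 ≤ i → 1 ≤ a i) (n : ℕ) :
    cylDenom a (n + 1) ≤ 6 * a (n + 1) ^ 2 * cylDenom a n := by
  have hq := convDen_succ_le ha n
  have hk := ha (n + 1) n.succ_pos
  unfold cylDenom
  rw [Nat.add_sub_cancel]
  calc convDen a (n + 1) * (convDen a (n + 1) + convDen a n)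
      ≤ (2 * a (n + 1) * convDen a n) * (3 * a (n + 1) * (convDen a n + convDen a (n - 1))) := by
        gcongr
        nlinarith
    _ = 6 * a (n + 1) ^ 2 * (convDen a n * (convDen a n + convDen a (n - 1))) := by ring

theorem sq_prod_le_cylDenom (n : ℕ) : (∏ i ∈ Finset.Icc 1 n, a i) ^ 2 ≤ cylDenom a n := by
  rw [sq, cylDenom]
  exact Nat.mul_le_mul (prod_le_convDen n) ((prod_le_convDen n).trans (Nat.le_add_right _ _))

theorem two_mul_sum_log_le_log_cylDenom (ha : ∀ i, 1 ≤ i → 1 ≤ a i) (n : ℕ) :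
    2 * ∑ i ∈ Finset.Icc 1 n, Real.log (a i) ≤ Real.log (cylDenom a n) := by
  have hpos : ∀ i ∈ Finset.Icc 1 n, (0 : ℝ) < a i := fun i hi ↦ by
    exact_mod_cast ha i (Finset.mem_Icc.1 hi).1
  have hlog : Real.log ((∏ i ∈ Finset.Icc 1 n, (a i : ℝ)) ^ 2) =
      2 * ∑ i ∈ Finset.Icc 1 n, Real.log (a i) := by
    rw [Real.log_pow, Real.log_prod fun i hi ↦ (hpos i hi).ne', Nat.cast_ofNat]
  rw [← hlog]
  refine Real.log_le_log (pow_pos (Finset.prod_pos hpos) 2) ?_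
  exact_mod_cast sq_prod_le_cylDenom n

theorem log_cylDenom_succ_le (ha : ∀ i, 1 ≤ i → 1 ≤ a i) {n : ℕ} (h6 : 6 ≤ a (n + 1)) :
    Real.log (cylDenom a (n + 1)) ≤ Real.log (cylDenom a n) + 3 * Real.log (a (n + 1)) := by
  have hD := cylDenom_pos ha n
  have hk : (0 : ℝ) < a (n + 1) := by positivity
  have hle : (cylDenom a (n + 1) : ℝ) ≤ a (n + 1) ^ 3 * cylDenom a n := by
    have : cylDenom a (n + 1) ≤ a (n + 1) ^ 3 * cylDenom a n :=
      (cylDenom_succ_le ha n).trans (by gcongr; nlinarith)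
    exact_mod_cast this
  calc Real.log (cylDenom a (n + 1))
      ≤ Real.log (a (n + 1) ^ 3 * cylDenom a n) :=
        Real.log_le_log (by exact_mod_cast cylDenom_pos ha (n + 1)) hle
    _ = Real.log (cylDenom a n) + 3 * Real.log (a (n + 1)) := by
        rw [Real.log_mul (by positivity) (by positivity), Real.log_pow, Nat.cast_ofNat, add_comm]

end CylinderDenominator

/-- Lemma 4.3: if the partial quotients of an irrational `x ∈ (0,1)` tend to infinity
and `log a_n(x) / log a_{n+1}(x) → 1`, then `log |I_n(x)| / log |I_{n+1}(x)| → 1`. -/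
theorem stmt14 (x : ℝ) (hx : x ∈ Set.Ioo (0 : ℝ) 1) (hirr : Irrational x)
    (h1 : Filter.Tendsto (fun n : ℕ => (pq x n : ℝ)) Filter.atTop Filter.atTop)
    (h2 : Filter.Tendsto
      (fun n : ℕ => Real.log (pq x n) / Real.log (pq x (n + 1)))
      Filter.atTop (nhds 1)) :
    Filter.Tendsto
      (fun n : ℕ => Real.log (Metric.diam (cyl n (pq x))) /
        Real.log (Metric.diam (cyl (n + 1) (pq x))))
      Filter.atTop (nhds 1) := by
  have ha (i : ℕ) (_ : 1 ≤ i) : 1 ≤ pq x i := one_le_pq hx hirr i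
  have hsum := tendsto_sum_Icc_div_atTop (fun i hi ↦ Real.log_nonneg (by exact_mod_cast ha i hi))
    ((Real.tendsto_log_atTop.comp h1).eventually_gt_atTop 0) h2
  have hlog : Tendsto (fun n ↦ Real.log (cylDenom (pq x) n) / Real.log (cylDenom (pq x) (n + 1)))
      atTop (𝓝 1) := by
    refine tendsto_div_succ_of_increment_le
      (s := fun n ↦ 2 * ∑ i ∈ Finset.Icc 1 n, Real.log (pq x i))
      (u := fun n ↦ 3 * Real.log (pq x n)) (.of_forall (two_mul_sum_log_le_log_cylDenom ha))
      (.of_forall fun n ↦ Real.log_le_log (by exact_mod_cast cylDenom_pos ha n)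
        (by exact_mod_cast cylDenom_mono ha n.le_succ)) ?_ ?_
    · filter_upwards [(tendsto_add_atTop_nat 1).eventually (h1.eventually_ge_atTop 6)] with n hn
      exact log_cylDenom_succ_le ha (by exact_mod_cast hn)
    · refine (hsum.const_mul_atTop (by norm_num : (0 : ℝ) < 2 / 3)).congr fun n ↦ ?_
      ring
  refine hlog.congr' ?_
  filter_upwards [eventually_ge_atTop 1] with n hn
  rw [diam_cyl ha hn, diam_cyl ha (by omega), Real.log_inv, Real.log_inv, neg_div_neg_eq]
end

section
/- Let t ≥ 2 be an integer, let β ∈ (1, ∞), and let (σ_n)_{n≥1} be a strictly increasing sequence of positive integers with σ_n − σ_{n−1} ≥ n for all n ≥ 2 and lim_{n→∞} (σ_n − σ_{n−1})/n = β, where σ_0 := 1. For each m ≥ 1 let V_m = {σ_{m−1} + m − 1, σ_{m−1} + m, …, σ_m}, and for each k ≥ 1 define A_k = (∑_{m=1}^{k} ∑_{i∈V_m} log((2i+1)^t − (2i)^t)) / (log 2 + 2[∑_{m=1}^{k} ∑_{i∈V_m} t·log(2i+1) + ∑_{m=1}^{k} (m−1)·log((2σ_m+1)^t + m)]). Then liminf_{k→∞}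 A_k ≥ (t−1)(β−1)/(2tβ). -/
/-!
Write `N_k` for the numerator of `A_k` and `S_k`, `T_k` for the two sums in its denominator.
Termwise, `(a + 1)^t - a^t ≥ (a + 1)^(t-1)` gives `N_k ≥ (1 - 1/t) S_k`. In block `m`, the
endpoint term is about `(m - 1) t log(2σ_m + 1)`, while `S`'s block is at least
`|V_m| t log(2σ_{m-1} + 1)` with `|V_m| ~ (β - 1) m`; as `σ` grows quadratically,
`log(2σ_m + 1) - log(2σ_{m-1} + 1) → 0`. Hence for every `c > 1/(β - 1)` the endpoint term is
eventually at most `c` times `S`'s block, so `T_k ≤ c S_k + O(1)`. Since `S_k → ∞`, this gives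
`liminf A_k ≥ (1 - 1/t) / (2 + 2c)`, and letting `c ↓ 1/(β - 1)` gives the bound.
-/
open Filter Finset Real Topology

theorem sum_le_sum_range_abs_of_nonpos {d : ℕ → ℝ} {M : ℕ} (hd : ∀ m, M ≤ m → d m ≤ 0)
    (s : Finset ℕ) : ∑ m ∈ s, d m ≤ ∑ m ∈ range M, |d m| :=
  calc ∑ m ∈ s, d m ≤ ∑ m ∈ s with m < M, |d m| := by
        rw [sum_filter]
        refine sum_le_sum fun m _ => ?_
        split_ifs with h
        · exact le_abs_self _
        · exact hd m (not_lt.mp h)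
    _ ≤ ∑ m ∈ range M, |d m| :=
        sum_le_sum_of_subset_of_nonneg (fun m hm => mem_range.mpr (mem_filter.mp hm).2)
          fun _ _ _ => abs_nonneg _

theorem exists_forall_sum_le_mul_sum_add {f g : ℕ → ℝ} {c : ℝ}
    (h : ∀ᶠ m in atTop, f m ≤ c * g m) :
    ∃ C, ∀ s : Finset ℕ, ∑ m ∈ s, f m ≤ c * ∑ m ∈ s, g m + C := by
  obtain ⟨M, hM⟩ := eventually_atTop.mp h
  refine ⟨∑ m ∈ range M, |f m - c * g m|, fun s => ?_⟩
  have := sum_le_sum_range_abs_of_nonpos (d := fun m => f m - c * g m)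
    (fun m hm => sub_nonpos.mpr (hM m hm)) s
  rw [sum_sub_distrib, ← mul_sum] at this
  linarith

theorem tendsto_mul_div_mul_add_atTop {a b C : ℝ} (hb : b ≠ 0) :
    Tendsto (fun x : ℝ => a * x / (b * x + C)) atTop (𝓝 (a / b)) := by
  have h : Tendsto (fun x : ℝ => a / (b + C * x⁻¹)) atTop (𝓝 (a / (b + C * 0))) :=
    tendsto_const_nhds.div (tendsto_const_nhds.add (tendsto_inv_atTop_zero.const_mul _))
      (by simpa using hb)
  rw [mul_zero, add_zero] at h
  refine h.congr' ?_
  filter_upwards [eventually_gt_atTop 0] with x hx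
  field_simp

theorem div_le_liminf_div_of_le_mul_add {N D S : ℕ → ℝ} {a b C : ℝ} (ha : 0 ≤ a) (hb : 0 < b)
    (hS : Tendsto S atTop atTop) (hN : ∀ k, a * S k ≤ N k) (hDpos : ∀ k, 0 < D k)
    (hD : ∀ k, D k ≤ b * S k + C)
    (hcobdd : IsCoboundedUnder (· ≥ ·) atTop fun k => N k / D k) :
    a / b ≤ liminf (fun k => N k / D k) atTop := by
  have hlim := (tendsto_mul_div_mul_add_atTop (a := a) (C := C) hb.ne').comp hS
  rw [← hlim.liminf_eq]
  refine liminf_le_liminf ?_ hlim.isBoundedUnder_ge hcobdd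
  filter_upwards [hS.eventually_gt_atTop 0] with k hk
  exact div_le_div₀ ((mul_nonneg ha hk.le).trans (hN k)) (hN k) (hDpos k) (hD k)

theorem div_le_liminf_div {N D S : ℕ → ℝ} {a b₀ : ℝ} (ha : 0 ≤ a) (hb₀ : 0 < b₀)
    (hS : Tendsto S atTop atTop) (hN : ∀ k, a * S k ≤ N k) (hDpos : ∀ k, 0 < D k)
    (hD : ∀ b > b₀, ∃ C, ∀ k, D k ≤ b * S k + C)
    (hcobdd : IsCoboundedUnder (· ≥ ·) atTop fun k => N k / D k) :
    a / b₀ ≤ liminf (fun k => N k / D k) atTop := by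
  have hcont : Tendsto (fun b => a / b) (𝓝[>] b₀) (𝓝 (a / b₀)) :=
    (continuousAt_const.div continuousAt_id hb₀.ne').tendsto.mono_left nhdsWithin_le_nhds
  refine le_of_tendsto hcont ?_
  filter_upwards [self_mem_nhdsWithin] with b hb
  obtain ⟨C, hC⟩ := hD b hb
  exact div_le_liminf_div_of_le_mul_add ha (hb₀.trans hb) hS hN hDpos hC hcobdd

theorem succ_pow_sub_one_le_succ_pow_sub_pow {t : ℕ} (ht : 1 ≤ t) (a : ℕ) :
    (a + 1) ^ (t - 1) ≤ (a + 1) ^ t - a ^ t := by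
  obtain ⟨s, rfl⟩ := Nat.exists_eq_add_of_le' ht
  have : a ^ s * a ≤ (a + 1) ^ s * a := Nat.mul_le_mul_right _ (Nat.pow_le_pow_left (by omega) _)
  simp only [Nat.add_sub_cancel, pow_succ]
  rw [mul_add_one]
  omega

theorem mul_log_le_log_succ_pow_sub_pow {t : ℕ} (ht : 1 ≤ t) (a : ℕ) :
    ((t : ℝ) - 1) * log ((a + 1 : ℕ) : ℝ) ≤ log (((a + 1) ^ t - a ^ t : ℕ) : ℝ) := by
  have h := log_le_log (by positivity)
    (Nat.cast_le (α := ℝ).mpr (succ_pow_sub_one_le_succ_pow_sub_pow ht a))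
  rwa [Nat.cast_pow, log_pow, Nat.cast_sub ht, Nat.cast_one] at h

theorem log_succ_pow_sub_pow_le {t : ℕ} (ht : 1 ≤ t) (a : ℕ) :
    log (((a + 1) ^ t - a ^ t : ℕ) : ℝ) ≤ t * log ((a + 1 : ℕ) : ℝ) := by
  have hpos : 0 < (a + 1) ^ t - a ^ t :=
    (pow_pos a.succ_pos _).trans_le (succ_pow_sub_one_le_succ_pow_sub_pow ht a)
  rw [← log_pow, ← Nat.cast_pow]
  exact log_le_log (by exact_mod_cast hpos) (by exact_mod_cast Nat.sub_le _ _)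

theorem log_pow_add_le {x m t : ℕ} (ht : 1 ≤ t) (hx : 1 ≤ x) (hm : m ≤ x) :
    log ((x ^ t + m : ℕ) : ℝ) ≤ t * log (x : ℝ) + log 2 := by
  have hle : x ^ t + m ≤ 2 * x ^ t := by
    have := Nat.le_self_pow (by omega : t ≠ 0) x
    omega
  have h := log_le_log (by positivity) (Nat.cast_le (α := ℝ).mpr hle)
  rw [Nat.cast_mul, Nat.cast_pow, log_mul (by norm_num) (by positivity), log_pow,
    Nat.cast_ofNat] at h
  linarith

def blockV (σ : ℕ → ℕ) (m : ℕ) : Finset ℕ := Icc (σ (m - 1) + m - 1) (σ m)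

noncomputable def gapLogSum (t : ℕ) (σ : ℕ → ℕ) (m : ℕ) : ℝ :=
  ∑ i ∈ blockV σ m, log (((2 * i + 1) ^ t - (2 * i) ^ t : ℕ) : ℝ)

noncomputable def powLogSum (t : ℕ) (σ : ℕ → ℕ) (m : ℕ) : ℝ :=
  ∑ i ∈ blockV σ m, (t : ℝ) * log ((2 * i + 1 : ℕ) : ℝ)

noncomputable def endpointLogTerm (t : ℕ) (σ : ℕ → ℕ) (m : ℕ) : ℝ :=
  ((m : ℝ) - 1) * log (((2 * σ m + 1) ^ t + m : ℕ) : ℝ)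

section GapSequence

variable {σ : ℕ → ℕ} {β : ℝ}

theorem add_le_of_le_sub_pred (hgap : ∀ n : ℕ, 2 ≤ n → n ≤ σ n - σ (n - 1)) {m : ℕ}
    (hm : 2 ≤ m) : σ (m - 1) + m ≤ σ m := by
  have := hgap m hm
  omega

theorem sq_le_two_mul_add_one (hgap : ∀ n : ℕ, 2 ≤ n → n ≤ σ n - σ (n - 1)) :
    ∀ n, n ^ 2 ≤ 2 * σ n + 1
  | 0 => by simp
  | 1 => by simp
  | n + 2 => by
    have ih := sq_le_two_mul_add_one hgap (n + 1)
    have step : σ (n + 1) + (n + 2) ≤ σ (n + 2) :=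
      add_le_of_le_sub_pred hgap (m := n + 2) (by omega)
    nlinarith

theorem card_blockV_add (hgap : ∀ n : ℕ, 2 ≤ n → n ≤ σ n - σ (n - 1)) {m : ℕ} (hm : 2 ≤ m) :
    (blockV σ m).card + m = σ m - σ (m - 1) + 2 := by
  have := add_le_of_le_sub_pred hgap hm
  rw [blockV, Nat.card_Icc]
  omega

theorem tendsto_card_blockV_div (hgap : ∀ n : ℕ, 2 ≤ n → n ≤ σ n - σ (n - 1))
    (hlim : Tendsto (fun n : ℕ => ((σ n - σ (n - 1) : ℕ) : ℝ) / n) atTop (𝓝 β)) :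
    Tendsto (fun m : ℕ => ((blockV σ m).card : ℝ) / m) atTop (𝓝 (β - 1)) := by
  have h := (hlim.sub_const 1).add (tendsto_const_div_atTop_nhds_zero_nat (2 : ℝ))
  rw [add_zero] at h
  refine h.congr' ?_
  filter_upwards [eventually_ge_atTop 2] with m hm
  have hcard : ((blockV σ m).card : ℝ) + m = ((σ m - σ (m - 1) : ℕ) : ℝ) + 2 := by
    exact_mod_cast card_blockV_add hgap hm
  have hm0 : (m : ℝ) ≠ 0 := by positivity
  field_simp
  linarith

theorem tendsto_two_mul_pred_add_one_div_atTop
    (hgap : ∀ n : ℕ, 2 ≤ n → n ≤ σ n - σ (n - 1)) :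
    Tendsto (fun m : ℕ => ((2 * σ (m - 1) + 1 : ℕ) : ℝ) / m) atTop atTop := by
  refine tendsto_atTop_mono' _ ?_
    (tendsto_atTop_add_const_right _ (-2) tendsto_natCast_atTop_atTop)
  filter_upwards [eventually_ge_atTop 1] with m hm
  have hsq : ((m : ℝ) - 1) ^ 2 ≤ ((2 * σ (m - 1) + 1 : ℕ) : ℝ) := by
    have := sq_le_two_mul_add_one hgap (m - 1)
    rw [← Nat.cast_one, ← Nat.cast_sub hm]
    exact_mod_cast this
  rw [le_div_iff₀ (by positivity)]
  nlinarith

theorem tendsto_log_two_mul_pred_add_one_atTop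
    (hgap : ∀ n : ℕ, 2 ≤ n → n ≤ σ n - σ (n - 1)) :
    Tendsto (fun m : ℕ => log ((2 * σ (m - 1) + 1 : ℕ) : ℝ)) atTop atTop := by
  refine tendsto_log_atTop.comp
    (tendsto_atTop_mono' _ ?_ (tendsto_two_mul_pred_add_one_div_atTop hgap))
  filter_upwards [eventually_ge_atTop 1] with m hm
  exact div_le_self (by positivity) (by exact_mod_cast hm)

theorem tendsto_log_sub_log_pred (hgap : ∀ n : ℕ, 2 ≤ n → n ≤ σ n - σ (n - 1))
    (hlim : Tendsto (fun n : ℕ => ((σ n - σ (n - 1) : ℕ) : ℝ) / n) atTop (𝓝 β)) :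
    Tendsto (fun m : ℕ => log ((2 * σ m + 1 : ℕ) : ℝ) - log ((2 * σ (m - 1) + 1 : ℕ) : ℝ))
      atTop (𝓝 0) := by
  have hup := (hlim.const_mul 2).div_atTop (tendsto_two_mul_pred_add_one_div_atTop hgap)
  refine tendsto_of_tendsto_of_tendsto_of_le_of_le' tendsto_const_nhds hup ?_ ?_
  all_goals filter_upwards [eventually_ge_atTop 2] with m hm
  all_goals have hle := add_le_of_le_sub_pred hgap hm
  · exact sub_nonneg.mpr (log_le_log (by positivity) (by exact_mod_cast (by omega)))
  · set x : ℝ := ((2 * σ (m - 1) + 1 : ℕ) : ℝ)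
    have hx : 0 < x := by positivity
    have hm0 : (m : ℝ) ≠ 0 := by positivity
    have hnext : ((2 * σ m + 1 : ℕ) : ℝ) = x + 2 * ((σ m - σ (m - 1) : ℕ) : ℝ) := by
      simp only [x]
      push_cast [Nat.cast_sub (by omega : σ (m - 1) ≤ σ m)]
      ring
    rw [← log_div (by positivity) hx.ne']
    calc log (((2 * σ m + 1 : ℕ) : ℝ) / x) ≤ ((2 * σ m + 1 : ℕ) : ℝ) / x - 1 :=
          log_le_sub_one_of_pos (by positivity)
      _ = _ := by
          rw [hnext]
          field_simp
          ring

theorem two_le_card_blockV (hgap : ∀ n : ℕ, 2 ≤ n → n ≤ σ n - σ (n - 1)) {m : ℕ}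
    (hm : 2 ≤ m) : 2 ≤ (blockV σ m).card := by
  have := card_blockV_add hgap hm
  have := hgap m hm
  omega

theorem log_pred_le_log (hgap : ∀ n : ℕ, 2 ≤ n → n ≤ σ n - σ (n - 1)) {m : ℕ} (hm : 2 ≤ m) :
    log ((2 * σ (m - 1) + 1 : ℕ) : ℝ) ≤ log ((2 * σ m + 1 : ℕ) : ℝ) := by
  have := add_le_of_le_sub_pred hgap hm
  exact log_le_log (by positivity) (by exact_mod_cast (by omega))

variable {t : ℕ}

theorem powLogSum_nonneg (m : ℕ) : 0 ≤ powLogSum t σ m :=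
  sum_nonneg fun _ _ => mul_nonneg (Nat.cast_nonneg _) (log_natCast_nonneg _)

theorem card_mul_le_powLogSum {m : ℕ} (hm : 1 ≤ m) :
    (blockV σ m).card * (t * log ((2 * σ (m - 1) + 1 : ℕ) : ℝ)) ≤ powLogSum t σ m := by
  rw [← nsmul_eq_mul]
  refine card_nsmul_le_sum _ _ _ fun i hi => ?_
  have hi : σ (m - 1) ≤ i := by simp only [blockV, mem_Icc] at hi; omega
  exact mul_le_mul_of_nonneg_left (log_le_log (by positivity) (by exact_mod_cast (by omega)))
    (Nat.cast_nonneg _)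

theorem gapLogSum_le_powLogSum (ht : 1 ≤ t) (m : ℕ) : gapLogSum t σ m ≤ powLogSum t σ m :=
  sum_le_sum fun i _ => log_succ_pow_sub_pow_le ht (2 * i)

theorem mul_powLogSum_le_gapLogSum (ht : 1 ≤ t) (m : ℕ) :
    ((t : ℝ) - 1) / t * powLogSum t σ m ≤ gapLogSum t σ m := by
  rw [powLogSum, mul_sum]
  refine sum_le_sum fun i _ => ?_
  have : (t : ℝ) ≠ 0 := by positivity
  calc ((t : ℝ) - 1) / t * (t * log ((2 * i + 1 : ℕ) : ℝ))
      = ((t : ℝ) - 1) * log ((2 * i + 1 : ℕ) : ℝ) := by field_simp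
    _ ≤ _ := mul_log_le_log_succ_pow_sub_pow ht (2 * i)

theorem sum_endpointLogTerm_nonneg (k : ℕ) : 0 ≤ ∑ m ∈ Icc 1 k, endpointLogTerm t σ m :=
  sum_nonneg fun _ hm =>
    mul_nonneg (sub_nonneg.mpr (by exact_mod_cast (mem_Icc.mp hm).1)) (log_natCast_nonneg _)

theorem endpointLogTerm_le (hgap : ∀ n : ℕ, 2 ≤ n → n ≤ σ n - σ (n - 1)) (ht : 1 ≤ t) {m : ℕ}
    (hm : 1 ≤ m) :
    endpointLogTerm t σ m ≤ ((m : ℝ) - 1) * (t * log ((2 * σ m + 1 : ℕ) : ℝ) + log 2) := by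
  have hsq := sq_le_two_mul_add_one hgap m
  exact mul_le_mul_of_nonneg_left (log_pow_add_le ht (by omega) (by nlinarith))
    (sub_nonneg.mpr (by exact_mod_cast hm))

theorem eventually_endpointLogTerm_le_mul_powLogSum (hgap : ∀ n : ℕ, 2 ≤ n → n ≤ σ n - σ (n - 1))
    (hlim : Tendsto (fun n : ℕ => ((σ n - σ (n - 1) : ℕ) : ℝ) / n) atTop (𝓝 β))
    (ht : 1 ≤ t) (hβ : 1 < β) {c : ℝ} (hc : 1 / (β - 1) < c) :
    ∀ᶠ m in atTop, endpointLogTerm t σ m ≤ c * powLogSum t σ m := by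
  set L := fun m : ℕ => log ((2 * σ (m - 1) + 1 : ℕ) : ℝ)
  set e := fun m : ℕ => log ((2 * σ m + 1 : ℕ) : ℝ) - L m
  set v := fun m : ℕ => ((blockV σ m).card : ℝ)
  have hL := tendsto_log_two_mul_pred_add_one_atTop hgap
  have hratio : Tendsto (fun m : ℕ => ((m : ℝ) - 1) / v m) atTop (𝓝 (1 / (β - 1))) := by
    have h := ((tendsto_const_nhds (x := (1 : ℝ))).sub
      (tendsto_const_div_atTop_nhds_zero_nat 1)).div (tendsto_card_blockV_div hgap hlim)
      (by linarith)
    rw [sub_zero] at h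
    refine h.congr' ?_
    filter_upwards [eventually_ge_atTop 1] with m hm
    have hm0 : (m : ℝ) ≠ 0 := by positivity
    simp only [Pi.div_apply, v]
    field_simp
  have hu : Tendsto (fun m : ℕ => ((m : ℝ) - 1) / v m * (1 + (e m + log 2 / t) / L m)) atTop
      (𝓝 (1 / (β - 1))) := by
    have h := hratio.mul
      ((((tendsto_log_sub_log_pred hgap hlim).add_const (log 2 / t)).div_atTop hL).const_add 1)
    rwa [add_zero, mul_one] at h
  filter_upwards [hu.eventually (gt_mem_nhds hc), hL.eventually_gt_atTop 0,
    eventually_ge_atTop 2] with m hum hLm hm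
  have hv : 0 < v m := by have := two_le_card_blockV hgap hm; simp only [v]; positivity
  have he : 0 ≤ e m := sub_nonneg.mpr (log_pred_le_log hgap hm)
  have hm1 : (0 : ℝ) ≤ m - 1 := sub_nonneg.mpr (by exact_mod_cast (by omega : 1 ≤ m))
  have hu0 : 0 ≤ ((m : ℝ) - 1) / v m * (1 + (e m + log 2 / t) / L m) := by positivity
  calc endpointLogTerm t σ m ≤ ((m : ℝ) - 1) * (t * log ((2 * σ m + 1 : ℕ) : ℝ) + log 2) :=
        endpointLogTerm_le hgap ht (by omega)
    _ = ((m : ℝ) - 1) / v m * (1 + (e m + log 2 / t) / L m) * (v m * (t * L m)) := by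
        have : (t : ℝ) ≠ 0 := by positivity
        have : L m ≠ 0 := hLm.ne'
        simp only [e]
        field_simp
        ring
    _ ≤ ((m : ℝ) - 1) / v m * (1 + (e m + log 2 / t) / L m) * powLogSum t σ m :=
        mul_le_mul_of_nonneg_left (card_mul_le_powLogSum (by omega)) hu0
    _ ≤ c * powLogSum t σ m := mul_le_mul_of_nonneg_right hum.le (powLogSum_nonneg m)

theorem tendsto_sum_powLogSum_atTop (hgap : ∀ n : ℕ, 2 ≤ n → n ≤ σ n - σ (n - 1))
    (ht : 1 ≤ t) : Tendsto (fun k => ∑ m ∈ Icc 1 k, powLogSum t σ m) atTop atTop := by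
  refine tendsto_atTop_mono' _ ?_ (tendsto_log_two_mul_pred_add_one_atTop hgap)
  filter_upwards [eventually_ge_atTop 2] with k hk
  have hv : (1 : ℝ) ≤ (blockV σ k).card := by
    have := two_le_card_blockV hgap hk
    exact_mod_cast (by omega : 1 ≤ (blockV σ k).card)
  have ht' : (1 : ℝ) ≤ t := by exact_mod_cast ht
  have hL : 0 ≤ log ((2 * σ (k - 1) + 1 : ℕ) : ℝ) := log_natCast_nonneg _
  calc log ((2 * σ (k - 1) + 1 : ℕ) : ℝ)
      ≤ (blockV σ k).card * (t * log ((2 * σ (k - 1) + 1 : ℕ) : ℝ)) := by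
        nlinarith [mul_le_mul_of_nonneg_right ht' hL]
    _ ≤ powLogSum t σ k := card_mul_le_powLogSum (by omega)
    _ ≤ ∑ m ∈ Icc 1 k, powLogSum t σ m :=
        single_le_sum (fun m _ => powLogSum_nonneg m) (mem_Icc.mpr ⟨by omega, le_rfl⟩)

end GapSequence

theorem stmt18_general (t : ℕ) (ht : 2 ≤ t) (β : ℝ) (hβ : 1 < β)
    (σ : ℕ → ℕ)
    (hgap : ∀ n : ℕ, 2 ≤ n → n ≤ σ n - σ (n - 1))
    (hlim : Filter.Tendsto (fun n : ℕ => ((σ n - σ (n - 1) : ℕ) : ℝ) / (n : ℝ))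
      Filter.atTop (nhds β)) :
    ((t : ℝ) - 1) * (β - 1) / (2 * (t : ℝ) * β) ≤
      Filter.liminf (fun k : ℕ =>
        (∑ m ∈ Finset.Icc 1 k, ∑ i ∈ Finset.Icc (σ (m - 1) + m - 1) (σ m),
            Real.log ((((2 * i + 1) ^ t - (2 * i) ^ t : ℕ)) : ℝ)) /
          (Real.log 2 + 2 *
            ((∑ m ∈ Finset.Icc 1 k, ∑ i ∈ Finset.Icc (σ (m - 1) + m - 1) (σ m),
                (t : ℝ) * Real.log (((2 * i + 1 : ℕ)) : ℝ)) +
              ∑ m ∈ Finset.Icc 1 k,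
                ((m : ℝ) - 1) * Real.log ((((2 * σ m + 1) ^ t + m : ℕ)) : ℝ))))
        Filter.atTop := by
  have ht1 : 1 ≤ t := by omega
  have htR : (2 : ℝ) ≤ t := by exact_mod_cast ht
  have hβ1 : 0 < β - 1 := by linarith
  have hDpos (k : ℕ) : 0 < log 2 +
      2 * (∑ m ∈ Icc 1 k, powLogSum t σ m + ∑ m ∈ Icc 1 k, endpointLogTerm t σ m) := by
    have := sum_nonneg fun m (_ : m ∈ Icc 1 k) => powLogSum_nonneg (t := t) (σ := σ) m
    have := sum_endpointLogTerm_nonneg (t := t) (σ := σ) k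
    linarith [log_pos one_lt_two]
  rw [show ((t : ℝ) - 1) * (β - 1) / (2 * t * β) = ((t - 1) / t) / (2 + 2 * (1 / (β - 1))) by
    field_simp; ring]
  refine div_le_liminf_div (S := fun k => ∑ m ∈ Icc 1 k, powLogSum t σ m)
    (N := fun k => ∑ m ∈ Icc 1 k, gapLogSum t σ m)
    (D := fun k => log 2 +
      2 * (∑ m ∈ Icc 1 k, powLogSum t σ m + ∑ m ∈ Icc 1 k, endpointLogTerm t σ m))
    (div_nonneg (by linarith) (by linarith)) (by positivity)
    (tendsto_sum_powLogSum_atTop hgap ht1) (fun k => ?_) hDpos (fun b hb => ?_) ?_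
  · rw [mul_sum]
    exact sum_le_sum fun m _ => mul_powLogSum_le_gapLogSum ht1 m
  · obtain ⟨C, hC⟩ := exists_forall_sum_le_mul_sum_add
      (eventually_endpointLogTerm_le_mul_powLogSum hgap hlim ht1 hβ (c := (b - 2) / 2)
        (by linarith))
    exact ⟨log 2 + 2 * C, fun k => by linarith [hC (Icc 1 k)]⟩
  · refine isCoboundedUnder_ge_of_le atTop (x := 1 / 2) fun k => ?_
    rw [div_le_iff₀ (hDpos k)]
    have := sum_le_sum fun m (_ : m ∈ Icc 1 k) => gapLogSum_le_powLogSum (σ := σ) ht1 m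
    have := sum_endpointLogTerm_nonneg (t := t) (σ := σ) k
    linarith [log_pos one_lt_two]

/-- Lemma 4.7 (case `β < ∞`): with `V_m = {σ_{m-1}+m-1, …, σ_m}` (σ_0 := 1) and
`A_k = (∑_{m=1}^k ∑_{i∈V_m} log((2i+1)^t-(2i)^t)) /
  (log 2 + 2[∑_{m=1}^k ∑_{i∈V_m} t log(2i+1) + ∑_{m=1}^k (m-1) log((2σ_m+1)^t+m)])`,
one has `liminf_k A_k ≥ (t-1)(β-1)/(2tβ)`. -/
theorem stmt18 (t : ℕ) (ht : 2 ≤ t) (β : ℝ) (hβ : 1 < β)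
    (σ : ℕ → ℕ) (hσ0 : σ 0 = 1) (hσ1 : 1 ≤ σ 1)
    (hmono : ∀ n : ℕ, 1 ≤ n → σ n < σ (n + 1))
    (hgap : ∀ n : ℕ, 2 ≤ n → n ≤ σ n - σ (n - 1))
    (hlim : Filter.Tendsto (fun n : ℕ => ((σ n - σ (n - 1) : ℕ) : ℝ) / (n : ℝ))
      Filter.atTop (nhds β)) :
    ((t : ℝ) - 1) * (β - 1) / (2 * (t : ℝ) * β) ≤
      Filter.liminf (fun k : ℕ =>
        (∑ m ∈ Finset.Icc 1 k, ∑ i ∈ Finset.Icc (σ (m - 1) + m - 1) (σ m),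
            Real.log ((((2 * i + 1) ^ t - (2 * i) ^ t : ℕ)) : ℝ)) /
          (Real.log 2 + 2 *
            ((∑ m ∈ Finset.Icc 1 k, ∑ i ∈ Finset.Icc (σ (m - 1) + m - 1) (σ m),
                (t : ℝ) * Real.log (((2 * i + 1 : ℕ)) : ℝ)) +
              ∑ m ∈ Finset.Icc 1 k,
                ((m : ℝ) - 1) * Real.log ((((2 * σ m + 1) ^ t + m : ℕ)) : ℝ))))
        Filter.atTop :=
  stmt18_general t ht β hβ σ hgap hlim
end
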